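/- arXiv:1008.2159 — 9 statements merged into one kernel-verified Lean document; each statement's English description precedes it below -/
import Mathlib

section
/- Let 𝒞 ⊆ 2^[n] be a family of sets and g : 𝒞 → ℤ a function. Define ℐ = { I ⊆ [n] : |I ∩ C| ≤ g(C) for all C ∈ 𝒞 }, and for I ∈ ℐ let T(I) = { C ∈ 𝒞 : |I ∩ C| = g(C) }. Suppose that for every I ∈ ℐ and every C₁, C₂ ∈ T(I), either C₁ ∪ C₂ ∈ T(I) or C₁ ∩ C₂ = ∅. Then, if ℐ is nonempty, ℐ is the family of independent sets of a matroid on [n]. -/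
/-- A nonempty family of finsets is the family of independent sets of a matroid
if it is downward closed and satisfies the exchange axiom. -/
def IsMatroidIndepFamily {n : ℕ} (Indep : Finset (Fin n) → Prop) : Prop :=
  (∃ I, Indep I) ∧
  (∀ I J : Finset (Fin n), J ⊆ I → Indep I → Indep J) ∧
  (∀ I J : Finset (Fin n), Indep I → Indep J → J.card < I.card →
    ∃ i ∈ I \ J, Indep (insert i J))

theorem stmt_2 (n : ℕ) (𝒞 : Finset (Finset (Fin n))) (g : Finset (Fin n) → ℤ)
    (Indep : Finset (Fin n) → Prop)
    (hIndep : ∀ I : Finset (Fin n), Indep I ↔ ∀ C ∈ 𝒞, ((I ∩ C).card : ℤ) ≤ g C)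
    (huncross : ∀ I : Finset (Fin n), Indep I → ∀ C₁ ∈ 𝒞, ∀ C₂ ∈ 𝒞,
      ((I ∩ C₁).card : ℤ) = g C₁ → ((I ∩ C₂).card : ℤ) = g C₂ →
      (C₁ ∪ C₂ ∈ 𝒞 ∧ ((I ∩ (C₁ ∪ C₂)).card : ℤ) = g (C₁ ∪ C₂)) ∨ C₁ ∩ C₂ = ∅)
    (hne : ∃ I, Indep I) :
    IsMatroidIndepFamily Indep := by
  classical
  refine ⟨hne, ?_, ?_⟩
  · intro I J hJI hI
    rw [hIndep] at hI ⊢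
    intro C hC
    refine le_trans ?_ (hI C hC)
    exact_mod_cast Finset.card_le_card (Finset.inter_subset_inter hJI (Finset.Subset.refl C))
  · intro I J hI hJ hlt
    by_contra hcon
    push_neg at hcon
    set 𝒯 : Finset (Finset (Fin n)) := 𝒞.filter (fun C => ((J ∩ C).card : ℤ) = g C) with h𝒯
    have hJmem : ∀ C ∈ 𝒞, ((J ∩ C).card : ℤ) ≤ g C := (hIndep J).1 hJ
    have hImem : ∀ C ∈ 𝒞, ((I ∩ C).card : ℤ) ≤ g C := (hIndep I).1 hI
    -- every element of I \ J lies in some tight set for J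
    have hcover : ∀ i ∈ I \ J, ∃ C ∈ 𝒯, i ∈ C := by
      intro i hi
      have hni := hcon i hi
      rw [hIndep] at hni
      push_neg at hni
      obtain ⟨C, hC, hgt⟩ := hni
      have hiC : i ∈ C := by
        by_contra hiC
        have : insert i J ∩ C = J ∩ C := by
          ext x
          simp only [Finset.mem_inter, Finset.mem_insert]
          constructor
          · rintro ⟨hx1 | hx1, hx2⟩
            · exact absurd (hx1 ▸ hx2) hiC
            · exact ⟨hx1, hx2⟩
          · rintro ⟨hx1, hx2⟩; exact ⟨Or.inr hx1, hx2⟩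
        rw [this] at hgt
        exact absurd (hJmem C hC) (not_le.2 hgt)
      have hsub : insert i J ∩ C ⊆ insert i (J ∩ C) := by
        intro x hx
        simp only [Finset.mem_inter, Finset.mem_insert] at hx ⊢
        tauto
      have hcard : (insert i J ∩ C).card ≤ (J ∩ C).card + 1 :=
        le_trans (Finset.card_le_card hsub) (Finset.card_insert_le _ _)
      have h1 : ((J ∩ C).card : ℤ) = g C := by
        have h2 := hJmem C hC
        have h3 : (g C : ℤ) < ((insert i J ∩ C).card : ℤ) := hgt
        have h4 : ((insert i J ∩ C).card : ℤ) ≤ ((J ∩ C).card : ℤ) + 1 := by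
          exact_mod_cast hcard
        omega
      exact ⟨C, Finset.mem_filter.2 ⟨hC, h1⟩, hiC⟩
    -- union of a nonempty family of tight sets all containing a common point is tight
    have key : ∀ (i : Fin n) (S : Finset (Finset (Fin n))), S ⊆ 𝒯 →
        (∀ C ∈ S, i ∈ C) → S.Nonempty → S.sup id ∈ 𝒯 := by
      intro i S
      induction S using Finset.induction_on with
      | empty => intro _ _ h; exact absurd h (by simp)
      | @insert C s hCs ih =>
        intro hsub hmem _
        rcases s.eq_empty_or_nonempty with rfl | hs
        · simpa using hsub (Finset.mem_insert_self C ∅)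
        · have hC𝒯 := hsub (Finset.mem_insert_self C s)
          have hsup := ih (fun x hx => hsub (Finset.mem_insert_of_mem hx))
            (fun x hx => hmem x (Finset.mem_insert_of_mem hx)) hs
          have hC := Finset.mem_filter.1 hC𝒯
          have hS := Finset.mem_filter.1 hsup
          rcases huncross J hJ C hC.1 (s.sup id) hS.1 hC.2 hS.2 with ⟨h1, h2⟩ | hdisj
          · rw [Finset.sup_insert]
            exact Finset.mem_filter.2 ⟨by simpa [Finset.sup_eq_union] using h1,
              by simpa [Finset.sup_eq_union] using h2⟩
          · exfalso
            have hi1 : i ∈ C := hmem C (Finset.mem_insert_self C s)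
            have hi2 : i ∈ s.sup id := by
              obtain ⟨x, hx⟩ := hs
              exact Finset.mem_sup.2 ⟨x, hx, hmem x (Finset.mem_insert_of_mem hx)⟩
            have : i ∈ C ∩ s.sup id := Finset.mem_inter.2 ⟨hi1, hi2⟩
            rw [hdisj] at this
            exact absurd this (Finset.notMem_empty i)
    -- the maximal tight set containing i
    set D : Fin n → Finset (Fin n) := fun i => (𝒯.filter (fun C => i ∈ C)).sup id with hD
    have hDtight : ∀ i ∈ I \ J, D i ∈ 𝒯 := by
      intro i hi
      obtain ⟨C, hC, hiC⟩ := hcover i hi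
      exact key i _ (Finset.filter_subset _ _)
        (fun x hx => (Finset.mem_filter.1 hx).2)
        ⟨C, Finset.mem_filter.2 ⟨hC, hiC⟩⟩
    have hDself : ∀ i ∈ I \ J, i ∈ D i := by
      intro i hi
      obtain ⟨C, hC, hiC⟩ := hcover i hi
      exact Finset.mem_sup.2 ⟨C, Finset.mem_filter.2 ⟨hC, hiC⟩, hiC⟩
    have hDmax : ∀ i : Fin n, ∀ C ∈ 𝒯, i ∈ C → C ⊆ D i := by
      intro i C hC hiC
      exact Finset.le_sup (f := id) (Finset.mem_filter.2 ⟨hC, hiC⟩)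
    -- distinct D i's are disjoint
    have hDdisj : ∀ i ∈ I \ J, ∀ j ∈ I \ J, D i ≠ D j → Disjoint (D i) (D j) := by
      intro i hi j hj hne'
      by_contra hnd
      obtain ⟨x, hx1, hx2⟩ := Finset.not_disjoint_iff.1 hnd
      have hti := Finset.mem_filter.1 (hDtight i hi)
      have htj := Finset.mem_filter.1 (hDtight j hj)
      rcases huncross J hJ (D i) hti.1 (D j) htj.1 hti.2 htj.2 with ⟨h1, h2⟩ | hdisj
      · have hu𝒯 : D i ∪ D j ∈ 𝒯 := Finset.mem_filter.2 ⟨h1, h2⟩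
        have hij : D i ∪ D j ⊆ D i :=
          hDmax i _ hu𝒯 (Finset.mem_union_left _ (hDself i hi))
        have hji : D i ∪ D j ⊆ D j :=
          hDmax j _ hu𝒯 (Finset.mem_union_right _ (hDself j hj))
        exact hne' (Finset.Subset.antisymm
          (le_trans Finset.subset_union_left hji)
          (le_trans Finset.subset_union_right hij))
      · have : x ∈ D i ∩ D j := Finset.mem_inter.2 ⟨hx1, hx2⟩
        rw [hdisj] at this
        exact absurd this (Finset.notMem_empty x)
    -- counting
    set 𝒟 : Finset (Finset (Fin n)) := (I \ J).image D with h𝒟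
    have h𝒟disj : ∀ x ∈ 𝒟, ∀ y ∈ 𝒟, x ≠ y → Disjoint x y := by
      intro x hx y hy hxy
      obtain ⟨i, hi, rfl⟩ := Finset.mem_image.1 hx
      obtain ⟨j, hj, rfl⟩ := Finset.mem_image.1 hy
      exact hDdisj i hi j hj hxy
    have h𝒟tight : ∀ E ∈ 𝒟, E ∈ 𝒯 := by
      intro E hE
      obtain ⟨i, hi, rfl⟩ := Finset.mem_image.1 hE
      exact hDtight i hi
    set U : Finset (Fin n) := 𝒟.biUnion id with hU
    have hIJU : ∀ i ∈ I \ J, i ∈ U := by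
      intro i hi
      exact Finset.mem_biUnion.2 ⟨D i, Finset.mem_image_of_mem D hi, hDself i hi⟩
    have hIU : I ∩ U = 𝒟.biUnion (fun E => I ∩ E) := by
      ext x
      simp only [hU, Finset.mem_inter, Finset.mem_biUnion, id]
      tauto
    have hJU : J ∩ U = 𝒟.biUnion (fun E => J ∩ E) := by
      ext x
      simp only [hU, Finset.mem_inter, Finset.mem_biUnion, id]
      tauto
    have hcardI : (I ∩ U).card = ∑ E ∈ 𝒟, (I ∩ E).card := by
      rw [hIU]
      exact Finset.card_biUnion (fun x hx y hy hxy =>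
        Finset.disjoint_left.2 (fun a ha ha' =>
          Finset.disjoint_left.1 (h𝒟disj x hx y hy hxy)
            (Finset.mem_inter.1 ha).2 (Finset.mem_inter.1 ha').2))
    have hcardJ : (J ∩ U).card = ∑ E ∈ 𝒟, (J ∩ E).card := by
      rw [hJU]
      exact Finset.card_biUnion (fun x hx y hy hxy =>
        Finset.disjoint_left.2 (fun a ha ha' =>
          Finset.disjoint_left.1 (h𝒟disj x hx y hy hxy)
            (Finset.mem_inter.1 ha).2 (Finset.mem_inter.1 ha').2))
    have hterm : ∀ E ∈ 𝒟, (I ∩ E).card ≤ (J ∩ E).card := by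
      intro E hE
      have ht := Finset.mem_filter.1 (h𝒟tight E hE)
      have h1 : ((I ∩ E).card : ℤ) ≤ g E := hImem E ht.1
      have h2 : ((J ∩ E).card : ℤ) = g E := ht.2
      exact_mod_cast h1.trans_eq h2.symm
    have h1 : (I ∩ U).card ≤ (J ∩ U).card := by
      rw [hcardI, hcardJ]
      exact Finset.sum_le_sum hterm
    have h2 : I \ U ⊆ J \ U := by
      intro x hx
      obtain ⟨hxI, hxU⟩ := Finset.mem_sdiff.1 hx
      by_cases hxJ : x ∈ J
      · exact Finset.mem_sdiff.2 ⟨hxJ, hxU⟩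
      · exact absurd (hIJU x (Finset.mem_sdiff.2 ⟨hxI, hxJ⟩)) hxU
    have hfin : I.card ≤ J.card := by
      rw [← Finset.card_inter_add_card_sdiff I U, ← Finset.card_inter_add_card_sdiff J U]
      exact Nat.add_le_add h1 (Finset.card_le_card h2)
    omega
end

section
/- Let A₁, …, A_k ⊆ [n] and b₁, …, b_k ∈ ℤ. For J ⊆ [k] define A(J) = ⋃_{j∈J} A_j and g(J) = Σ_{j∈J} b_j − (Σ_{j∈J} |A_j| − |A(J)|). Then the family ℐ = { I ⊆ [n] : |I ∩ A(J)| ≤ g(J) for all J ⊆ [k] }, if nonempty, is the family of independent sets of a matroid on [n]. -/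
/-- auxiliary "slack" function: `g J - |I' ∩ A(J)|` written in submodular-friendly form. -/
private def hfun {n k : ℕ} (A : Fin k → Finset (Fin n)) (b : Fin k → ℤ)
    (I' : Finset (Fin n)) (J : Finset (Fin k)) : ℤ :=
  (∑ j ∈ J, (b j - ((A j).card : ℤ))) + (((J.biUnion A) \ I').card : ℤ)

private lemma hfun_eq {n k : ℕ} (A : Fin k → Finset (Fin n)) (b : Fin k → ℤ)
    (g : Finset (Fin k) → ℤ)
    (hg : ∀ J : Finset (Fin k),
      g J = (∑ j ∈ J, b j) - ((∑ j ∈ J, ((A j).card : ℤ)) - ((J.biUnion A).card : ℤ)))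
    (I' : Finset (Fin n)) (J : Finset (Fin k)) :
    hfun A b I' J = g J - ((I' ∩ J.biUnion A).card : ℤ) := by
  have h1 : ((J.biUnion A) \ I').card + ((J.biUnion A) ∩ I').card = (J.biUnion A).card :=
    Finset.card_sdiff_add_card_inter _ _
  have h2 : (J.biUnion A) ∩ I' = I' ∩ (J.biUnion A) := Finset.inter_comm _ _
  rw [hfun, hg, Finset.sum_sub_distrib]
  rw [h2] at h1
  have := congrArg (Nat.cast : ℕ → ℤ) h1
  push_cast at this ⊢
  linarith

private lemma hfun_submodular {n k : ℕ} (A : Fin k → Finset (Fin n)) (b : Fin k → ℤ)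
    (I' : Finset (Fin n)) (J₁ J₂ : Finset (Fin k)) :
    hfun A b I' (J₁ ∪ J₂) + hfun A b I' (J₁ ∩ J₂) ≤ hfun A b I' J₁ + hfun A b I' J₂ := by
  have hsum : (∑ j ∈ J₁ ∪ J₂, (b j - ((A j).card : ℤ)))
      + (∑ j ∈ J₁ ∩ J₂, (b j - ((A j).card : ℤ)))
      = (∑ j ∈ J₁, (b j - ((A j).card : ℤ))) + (∑ j ∈ J₂, (b j - ((A j).card : ℤ))) :=
    Finset.sum_union_inter
  have hU : ((J₁ ∪ J₂).biUnion A) \ I' = ((J₁.biUnion A) \ I') ∪ ((J₂.biUnion A) \ I') := by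
    ext x
    simp only [Finset.mem_sdiff, Finset.mem_biUnion, Finset.mem_union]
    constructor
    · rintro ⟨⟨a, ha | ha, hxa⟩, hxI⟩
      · exact Or.inl ⟨⟨a, ha, hxa⟩, hxI⟩
      · exact Or.inr ⟨⟨a, ha, hxa⟩, hxI⟩
    · rintro (⟨⟨a, ha, hxa⟩, hxI⟩ | ⟨⟨a, ha, hxa⟩, hxI⟩)
      · exact ⟨⟨a, Or.inl ha, hxa⟩, hxI⟩
      · exact ⟨⟨a, Or.inr ha, hxa⟩, hxI⟩
  have hI : ((J₁ ∩ J₂).biUnion A) \ I' ⊆ ((J₁.biUnion A) \ I') ∩ ((J₂.biUnion A) \ I') := by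
    intro x hx
    simp only [Finset.mem_sdiff, Finset.mem_biUnion, Finset.mem_inter] at hx ⊢
    obtain ⟨⟨a, ha, hxa⟩, hxI⟩ := hx
    exact ⟨⟨⟨a, ha.1, hxa⟩, hxI⟩, ⟨a, ha.2, hxa⟩, hxI⟩
  have hcard : (((J₁ ∪ J₂).biUnion A) \ I').card + (((J₁ ∩ J₂).biUnion A) \ I').card
      ≤ ((J₁.biUnion A) \ I').card + ((J₂.biUnion A) \ I').card := by
    calc (((J₁ ∪ J₂).biUnion A) \ I').card + (((J₁ ∩ J₂).biUnion A) \ I').card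
        ≤ (((J₁.biUnion A) \ I') ∪ ((J₂.biUnion A) \ I')).card
          + (((J₁.biUnion A) \ I') ∩ ((J₂.biUnion A) \ I')).card := by
          rw [hU]; exact Nat.add_le_add_left (Finset.card_le_card hI) _
      _ = _ := Finset.card_union_add_card_inter _ _
  simp only [hfun]
  -- cast done
  push_cast at hcard
  linarith

private lemma hfun_biUnion_nonpos {n k : ℕ} (A : Fin k → Finset (Fin n)) (b : Fin k → ℤ)
    (I' : Finset (Fin n)) (hnn : ∀ J, 0 ≤ hfun A b I' J)
    (S : Finset (Fin n)) (F : Fin n → Finset (Fin k))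
    (hF : ∀ i ∈ S, hfun A b I' (F i) ≤ 0) :
    hfun A b I' (S.biUnion F) ≤ 0 := by
  classical
  induction S using Finset.induction_on with
  | empty => simp [hfun]
  | @insert a S ha ih =>
    rw [Finset.biUnion_insert]
    have h1 : hfun A b I' (F a) ≤ 0 := hF a (Finset.mem_insert_self _ _)
    have h2 : hfun A b I' (S.biUnion F) ≤ 0 :=
      ih fun i hi => hF i (Finset.mem_insert_of_mem hi)
    have h3 := hfun_submodular A b I' (F a) (S.biUnion F)
    have h4 := hnn (F a ∩ S.biUnion F)
    linarith

theorem stmt_3 (n k : ℕ) (A : Fin k → Finset (Fin n)) (b : Fin k → ℤ)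
    (g : Finset (Fin k) → ℤ)
    (hg : ∀ J : Finset (Fin k),
      g J = (∑ j ∈ J, b j) - ((∑ j ∈ J, ((A j).card : ℤ)) - ((J.biUnion A).card : ℤ)))
    (Indep : Finset (Fin n) → Prop)
    (hIndep : ∀ I : Finset (Fin n),
      Indep I ↔ ∀ J : Finset (Fin k), ((I ∩ J.biUnion A).card : ℤ) ≤ g J)
    (hne : ∃ I, Indep I) :
    IsMatroidIndepFamily Indep := by
  classical
  refine ⟨hne, ?_, ?_⟩
  · -- downward closed
    intro I J hJI hI
    rw [hIndep] at hI ⊢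
    intro K
    refine le_trans ?_ (hI K)
    exact_mod_cast Finset.card_le_card (Finset.inter_subset_inter hJI (Finset.Subset.refl _))
  · -- exchange
    intro I I' hI hI' hlt
    by_contra hcon
    push_neg at hcon
    -- for each i ∈ I \ I', get a tight set J_i containing i
    have key : ∀ i ∈ I \ I', ∃ J : Finset (Fin k),
        i ∈ J.biUnion A ∧ hfun A b I' J ≤ 0 := by
      intro i hi
      have hni := hcon i hi
      rw [hIndep] at hni
      push_neg at hni
      obtain ⟨J, hJ⟩ := hni
      have hiI' : i ∉ I' := (Finset.mem_sdiff.mp hi).2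
      have hI'J : ((I' ∩ J.biUnion A).card : ℤ) ≤ g J := (hIndep I').mp hI' J
      have hiA : i ∈ J.biUnion A := by
        by_contra hiA
        have : (insert i I') ∩ J.biUnion A = I' ∩ J.biUnion A := by
          ext x
          simp only [Finset.mem_inter, Finset.mem_insert]
          constructor
          · rintro ⟨hx1 | hx1, hx2⟩
            · exact absurd (hx1 ▸ hx2) hiA
            · exact ⟨hx1, hx2⟩
          · rintro ⟨hx1, hx2⟩; exact ⟨Or.inr hx1, hx2⟩
        rw [this] at hJ
        exact absurd hI'J (not_le.mpr hJ)
      have hins : (insert i I') ∩ J.biUnion A = insert i (I' ∩ J.biUnion A) := by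
        ext x
        simp only [Finset.mem_inter, Finset.mem_insert]
        constructor
        · rintro ⟨hx1 | hx1, hx2⟩
          · exact Or.inl hx1
          · exact Or.inr ⟨hx1, hx2⟩
        · rintro (rfl | ⟨hx1, hx2⟩)
          · exact ⟨Or.inl rfl, hiA⟩
          · exact ⟨Or.inr hx1, hx2⟩
      have hnotmem : i ∉ I' ∩ J.biUnion A := fun h => hiI' (Finset.mem_inter.mp h).1
      rw [hins, Finset.card_insert_of_notMem hnotmem] at hJ
      refine ⟨J, hiA, ?_⟩
      rw [hfun_eq A b g hg]
      push_cast at hJ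
      linarith
    choose F hF1 hF2 using key
    -- extend F to a total function
    set F' : Fin n → Finset (Fin k) := fun i =>
      if h : i ∈ I \ I' then F i h else ∅ with hF'
    have hnn : ∀ J, 0 ≤ hfun A b I' J := by
      intro J
      rw [hfun_eq A b g hg]
      have := (hIndep I').mp hI' J
      linarith
    set Jstar := (I \ I').biUnion F' with hJstar
    have hJstar_le : hfun A b I' Jstar ≤ 0 := by
      apply hfun_biUnion_nonpos A b I' hnn
      intro i hi
      simp only [hF', dif_pos hi]
      exact hF2 i hi
    set X := Jstar.biUnion A with hX
    have hsub : I \ I' ⊆ X := by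
      intro i hi
      have h1 : i ∈ (F i hi).biUnion A := hF1 i hi
      have h2 : F i hi ⊆ Jstar := by
        have heq : F' i = F i hi := dif_pos hi
        rw [← heq]
        exact Finset.subset_biUnion_of_mem F' hi
      exact Finset.biUnion_subset_biUnion_of_subset_left A h2 h1
    -- counting
    have hIX : ((I ∩ X).card : ℤ) ≤ g Jstar := (hIndep I).mp hI Jstar
    have hgI' : g Jstar ≤ ((I' ∩ X).card : ℤ) := by
      have := hJstar_le
      rw [hfun_eq A b g hg] at this
      linarith
    have e1 : (I ∩ X).card = (I \ I').card + (I ∩ I' ∩ X).card := by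
      have : I ∩ X = (I \ I') ∪ (I ∩ I' ∩ X) := by
        ext x
        simp only [Finset.mem_inter, Finset.mem_union, Finset.mem_sdiff]
        constructor
        · rintro ⟨hx1, hx2⟩
          by_cases hx3 : x ∈ I'
          · exact Or.inr ⟨⟨hx1, hx3⟩, hx2⟩
          · exact Or.inl ⟨hx1, hx3⟩
        · rintro (⟨hx1, hx2⟩ | ⟨⟨hx1, hx2⟩, hx3⟩)
          · exact ⟨hx1, hsub (Finset.mem_sdiff.mpr ⟨hx1, hx2⟩)⟩
          · exact ⟨hx1, hx3⟩
      rw [this, Finset.card_union_of_disjoint]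
      rw [Finset.disjoint_left]
      rintro x hx1 hx2
      exact (Finset.mem_sdiff.mp hx1).2 (Finset.mem_inter.mp (Finset.mem_inter.mp hx2).1).2
    have e2 : (I' ∩ X).card ≤ (I' \ I).card + (I ∩ I' ∩ X).card := by
      have : I' ∩ X ⊆ (I' \ I) ∪ (I ∩ I' ∩ X) := by
        intro x hx
        simp only [Finset.mem_inter] at hx
        simp only [Finset.mem_union, Finset.mem_sdiff, Finset.mem_inter]
        by_cases hx2 : x ∈ I
        · exact Or.inr ⟨⟨hx2, hx.1⟩, hx.2⟩
        · exact Or.inl ⟨hx.1, hx2⟩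
      calc (I' ∩ X).card ≤ ((I' \ I) ∪ (I ∩ I' ∩ X)).card := Finset.card_le_card this
        _ ≤ (I' \ I).card + (I ∩ I' ∩ X).card := Finset.card_union_le _ _
    -- conclude
    have hdiff : (I \ I').card ≤ (I' \ I).card := by
      have : ((I ∩ X).card : ℤ) ≤ ((I' ∩ X).card : ℤ) := le_trans hIX hgI'
      have h2 : (I ∩ X).card ≤ (I' ∩ X).card := by exact_mod_cast this
      omega
    have hc1 : I.card = (I \ I').card + (I ∩ I').card :=
      (Finset.card_sdiff_add_card_inter I I').symm
    have hc2 : I'.card = (I' \ I).card + (I' ∩ I).card :=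
      (Finset.card_sdiff_add_card_inter I' I).symm
    rw [Finset.inter_comm] at hc2
    omega
end

section
/- Let A₁, …, A_k ⊆ [n], let b₁, …, b_k and d be nonnegative integers, and suppose d ≤ min_{i,j ∈ [k]} (b_i + b_j − |A_i ∩ A_j|). Then the family ℐ = { I ⊆ [n] : |I| ≤ d and |I ∩ A_j| ≤ b_j for all j ∈ [k] } is the family of independent sets of a matroid on [n]. -/
theorem stmt_5 (n k : ℕ) (A : Fin k → Finset (Fin n)) (b : Fin k → ℕ) (d : ℕ)
    (hd : ∀ i j : Fin k, (d : ℤ) ≤ (b i : ℤ) + (b j : ℤ) - ((A i ∩ A j).card : ℤ))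
    (Indep : Finset (Fin n) → Prop)
    (hIndep : ∀ I : Finset (Fin n),
      Indep I ↔ I.card ≤ d ∧ ∀ j : Fin k, (I ∩ A j).card ≤ b j) :
    IsMatroidIndepFamily Indep := by
  refine ⟨⟨∅, ?_⟩, ?_, ?_⟩
  · rw [hIndep]; simp
  · intro I J hJI hI
    rw [hIndep] at hI ⊢
    exact ⟨le_trans (Finset.card_le_card hJI) hI.1,
      fun j => le_trans (Finset.card_le_card (Finset.inter_subset_inter_right hJI)) (hI.2 j)⟩
  · intro I J hI hJ hlt
    by_contra h
    push_neg at h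
    have hIJ : (I \ J).Nonempty := by
      rw [Finset.sdiff_nonempty]
      intro hsub
      exact absurd (Finset.card_le_card hsub) (not_le.mpr hlt)
    obtain ⟨i, hi⟩ := hIJ
    have hins := h i hi
    rw [hIndep] at hI hJ hins
    push_neg at hins
    have hiJ : i ∉ J := (Finset.mem_sdiff.mp hi).2
    have hcard : (insert i J).card = J.card + 1 := Finset.card_insert_of_notMem hiJ
    have h1 : (insert i J).card ≤ d := by omega
    obtain ⟨j, hj⟩ := hins h1
    have h2 : (insert i J) ∩ A j ⊆ insert i (J ∩ A j) := by
      intro x hx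
      simp only [Finset.mem_inter, Finset.mem_insert] at hx ⊢
      tauto
    have h3 : ((insert i J) ∩ A j).card ≤ (J ∩ A j).card + 1 :=
      le_trans (Finset.card_le_card h2) (Finset.card_insert_le _ _)
    have h4 : (J ∩ A j).card ≤ b j := hJ.2 j
    have h5 : (J ∩ A j).card ≤ (A j).card := Finset.card_le_card Finset.inter_subset_right
    have h6 : (J ∩ A j).card ≤ J.card := Finset.card_le_card Finset.inter_subset_left
    have h7 := hd j j
    rw [Finset.inter_self] at h7
    omega
end

section
/- Let A₁,…,A_k ⊆ [n], b₁,…,b_k ∈ ℤ, g(J) = Σ_{j∈J} b_j − (Σ_{j∈J}|A_j| − |⋃_{j∈J}A_j|). Suppose g is (d,τ)-large, i.e., g(J) ≥ 0 for all |J| < τ and g(J) ≥ d for all τ ≤ |J| ≤ 2τ−2. Define ḡ(J) = g(J) if |J| < τ and ḡ(J) = d otherwise. Then ℐ̄ = { I ⊆ [n] : |I ∩ A(J)| ≤ ḡ(J) for all J ⊆ [k] } is the family of independent sets of a matroid. -/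
private lemma card_inter_modular' {α : Type*} [DecidableEq α] (J X Y : Finset α) :
    ((J ∩ (X ∪ Y)).card : ℤ) + ((J ∩ (X ∩ Y)).card : ℤ)
      = ((J ∩ X).card : ℤ) + ((J ∩ Y).card : ℤ) := by
  have h1 : J ∩ (X ∪ Y) = (J ∩ X) ∪ (J ∩ Y) := by ext a; simp; tauto
  have h2 : J ∩ (X ∩ Y) = (J ∩ X) ∩ (J ∩ Y) := by ext a; simp; tauto
  rw [h1, h2]
  exact_mod_cast Finset.card_union_add_card_inter (J ∩ X) (J ∩ Y)

private lemma card_inter_sub_bound' {α : Type*} [DecidableEq α] (J : Finset α)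
    {X Y : Finset α} (h : Y ⊆ X) :
    ((J ∩ X).card : ℤ) ≤ ((J ∩ Y).card : ℤ) + (X.card : ℤ) - (Y.card : ℤ) := by
  have hsub : J ∩ X ⊆ (J ∩ Y) ∪ (X \ Y) := by
    intro a ha
    simp only [Finset.mem_inter] at ha
    by_cases hY : a ∈ Y
    · exact Finset.mem_union_left _ (Finset.mem_inter.mpr ⟨ha.1, hY⟩)
    · exact Finset.mem_union_right _ (Finset.mem_sdiff.mpr ⟨ha.2, hY⟩)
  have h1 : (J ∩ X).card ≤ (J ∩ Y).card + (X \ Y).card :=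
    le_trans (Finset.card_le_card hsub) (Finset.card_union_le _ _)
  have h2 : (X \ Y).card = X.card - Y.card := Finset.card_sdiff_of_subset h
  have h3 : Y.card ≤ X.card := Finset.card_le_card h
  omega

private lemma count_aux' {α : Type*} [DecidableEq α] (I J T : Finset α)
    (hsub : I \ J ⊆ T) (hle : (I ∩ T).card ≤ (J ∩ T).card) : I.card ≤ J.card := by
  have h1 : I \ T ⊆ J \ T := by
    intro a ha
    rw [Finset.mem_sdiff] at ha ⊢
    refine ⟨?_, ha.2⟩
    by_contra haJ
    exact ha.2 (hsub (Finset.mem_sdiff.mpr ⟨ha.1, haJ⟩))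
  calc I.card = (I ∩ T).card + (I \ T).card := (Finset.card_inter_add_card_sdiff I T).symm
    _ ≤ (J ∩ T).card + (J \ T).card := add_le_add hle (Finset.card_le_card h1)
    _ = J.card := Finset.card_inter_add_card_sdiff J T

theorem stmt_6 (n k : ℕ) (A : Fin k → Finset (Fin n)) (b : Fin k → ℤ) (d τ : ℕ)
    (g : Finset (Fin k) → ℤ)
    (hg : ∀ J : Finset (Fin k),
      g J = (∑ j ∈ J, b j) - ((∑ j ∈ J, ((A j).card : ℤ)) - ((J.biUnion A).card : ℤ)))
    (hlarge1 : ∀ J : Finset (Fin k), J.card < τ → 0 ≤ g J)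
    (hlarge2 : ∀ J : Finset (Fin k), τ ≤ J.card → (J.card : ℤ) ≤ 2 * (τ : ℤ) - 2 →
      (d : ℤ) ≤ g J)
    (gbar : Finset (Fin k) → ℤ)
    (hgbar : ∀ J : Finset (Fin k), gbar J = if J.card < τ then g J else (d : ℤ))
    (Indep : Finset (Fin n) → Prop)
    (hIndep : ∀ I : Finset (Fin n),
      Indep I ↔ ∀ J : Finset (Fin k), ((I ∩ J.biUnion A).card : ℤ) ≤ gbar J) :
    IsMatroidIndepFamily Indep := by
  -- nonnegativity of gbar
  have hgbar_nonneg : ∀ K : Finset (Fin k), 0 ≤ gbar K := by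
    intro K
    rw [hgbar]
    split
    · exact hlarge1 K ‹_›
    · exact_mod_cast Nat.zero_le d
  -- the submodular-type identity for g
  have gid : ∀ K₁ K₂ : Finset (Fin k),
      g (K₁ ∪ K₂) + g (K₁ ∩ K₂)
        = g K₁ + g K₂
          - (((K₁.biUnion A ∩ K₂.biUnion A).card : ℤ)
              - (((K₁ ∩ K₂).biUnion A).card : ℤ)) := by
    intro K₁ K₂
    rw [hg, hg, hg, hg]
    have hb : (∑ j ∈ K₁ ∪ K₂, b j) + (∑ j ∈ K₁ ∩ K₂, b j)
        = (∑ j ∈ K₁, b j) + (∑ j ∈ K₂, b j) := Finset.sum_union_inter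
    have hc : (∑ j ∈ K₁ ∪ K₂, ((A j).card : ℤ)) + (∑ j ∈ K₁ ∩ K₂, ((A j).card : ℤ))
        = (∑ j ∈ K₁, ((A j).card : ℤ)) + (∑ j ∈ K₂, ((A j).card : ℤ)) :=
      Finset.sum_union_inter
    have hu : (K₁ ∪ K₂).biUnion A = K₁.biUnion A ∪ K₂.biUnion A := by
      ext x
      simp only [Finset.mem_biUnion, Finset.mem_union]
      constructor
      · rintro ⟨j, hj | hj, hx⟩
        · exact Or.inl ⟨j, hj, hx⟩
        · exact Or.inr ⟨j, hj, hx⟩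
      · rintro (⟨j, hj, hx⟩ | ⟨j, hj, hx⟩)
        · exact ⟨j, Or.inl hj, hx⟩
        · exact ⟨j, Or.inr hj, hx⟩
    have hcard : (((K₁ ∪ K₂).biUnion A).card : ℤ)
        = ((K₁.biUnion A).card : ℤ) + ((K₂.biUnion A).card : ℤ)
          - ((K₁.biUnion A ∩ K₂.biUnion A).card : ℤ) := by
      rw [hu]
      have := Finset.card_union_add_card_inter (K₁.biUnion A) (K₂.biUnion A)
      omega
    linarith
  refine ⟨⟨∅, ?_⟩, ?_, ?_⟩
  · rw [hIndep]
    intro K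
    simp only [Finset.empty_inter, Finset.card_empty, Nat.cast_zero]
    exact hgbar_nonneg K
  · intro I J hJI hI
    rw [hIndep] at hI ⊢
    intro K
    refine le_trans ?_ (hI K)
    exact_mod_cast Finset.card_le_card (Finset.inter_subset_inter_right hJI)
  · intro I J hI hJ hlt
    by_contra hcon
    push_neg at hcon
    have hJind := (hIndep J).mp hJ
    have hIind := (hIndep I).mp hI
    -- every i in I \ J has a tight blocking set containing it
    have hblocked : ∀ i ∈ I \ J, ∃ K : Finset (Fin k),
        i ∈ K.biUnion A ∧ ((J ∩ K.biUnion A).card : ℤ) = gbar K := by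
      intro i hi
      have h1 := hcon i hi
      rw [hIndep] at h1
      push_neg at h1
      obtain ⟨K, hK⟩ := h1
      have hiA : i ∈ K.biUnion A := by
        by_contra hiA
        have heq : insert i J ∩ K.biUnion A = J ∩ K.biUnion A := by
          ext a
          simp only [Finset.mem_inter, Finset.mem_insert]
          constructor
          · rintro ⟨rfl | haJ, haA⟩
            · exact absurd haA hiA
            · exact ⟨haJ, haA⟩
          · rintro ⟨haJ, haA⟩; exact ⟨Or.inr haJ, haA⟩
        rw [heq] at hK
        exact absurd (hJind K) (not_le.mpr hK)
      refine ⟨K, hiA, ?_⟩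
      have h2 : insert i J ∩ K.biUnion A ⊆ insert i (J ∩ K.biUnion A) := by
        intro a ha
        simp only [Finset.mem_inter, Finset.mem_insert] at ha ⊢
        tauto
      have h3 := Finset.card_le_card h2
      have h4 := Finset.card_insert_le i (J ∩ K.biUnion A)
      have h5 := hJind K
      have h6 : ((insert i J ∩ K.biUnion A).card : ℤ)
          ≤ ((J ∩ K.biUnion A).card : ℤ) + 1 := by exact_mod_cast le_trans h3 h4
      linarith [hK]
    -- all elements of I \ J lie in the big union
    have hIJbig : I \ J ⊆ (Finset.univ : Finset (Fin k)).biUnion A := by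
      intro i hi
      obtain ⟨K, hiA, _⟩ := hblocked i hi
      exact Finset.biUnion_subset_biUnion_of_subset_left A (Finset.subset_univ K) hiA
    by_cases hUT : ((J ∩ (Finset.univ : Finset (Fin k)).biUnion A).card : ℤ)
        = gbar (Finset.univ : Finset (Fin k))
    · -- universal constraint tight: count directly
      have hIle : ((I ∩ (Finset.univ : Finset (Fin k)).biUnion A).card : ℤ)
          ≤ ((J ∩ (Finset.univ : Finset (Fin k)).biUnion A).card : ℤ) := by
        rw [hUT]; exact hIind _
      have := count_aux' I J _ hIJbig (by exact_mod_cast hIle)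
      omega
    · -- universal not tight: all tight blocking sets are small
      have hsmall : ∀ K : Finset (Fin k),
          ((J ∩ K.biUnion A).card : ℤ) = gbar K → K.card < τ := by
        intro K hK
        by_contra hτ
        push_neg at hτ
        have hgK : gbar K = d := by rw [hgbar, if_neg (not_lt.mpr hτ)]
        have hUcard : τ ≤ (Finset.univ : Finset (Fin k)).card :=
          le_trans hτ (Finset.card_le_univ K)
        have hgU : gbar (Finset.univ : Finset (Fin k)) = d := by
          rw [hgbar, if_neg (not_lt.mpr hUcard)]
        have hmono : (J ∩ K.biUnion A).card
            ≤ (J ∩ (Finset.univ : Finset (Fin k)).biUnion A).card :=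
          Finset.card_le_card (Finset.inter_subset_inter_left
            (Finset.biUnion_subset_biUnion_of_subset_left A (Finset.subset_univ K)))
        have hDle := hJind (Finset.univ : Finset (Fin k))
        apply hUT
        rw [hgU]
        rw [hgU] at hDle
        rw [hgK] at hK
        have hmono' : ((J ∩ K.biUnion A).card : ℤ)
            ≤ ((J ∩ (Finset.univ : Finset (Fin k)).biUnion A).card : ℤ) := by
          exact_mod_cast hmono
        linarith
      -- τ is positive
      have hIJne : (I \ J).Nonempty := by
        rw [Finset.sdiff_nonempty]
        intro hsub
        exact absurd (Finset.card_le_card hsub) (not_le.mpr hlt)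
      have hτpos : 0 < τ := by
        obtain ⟨i₀, hi₀⟩ := hIJne
        obtain ⟨K₀, _, hK₀⟩ := hblocked i₀ hi₀
        exact lt_of_le_of_lt (Nat.zero_le _) (hsmall K₀ hK₀)
      -- main induction: build one small tight set covering all of I \ J
      have hmain : ∀ S : Finset (Fin n), S ⊆ I \ J → ∃ K : Finset (Fin k),
          K.card < τ ∧ ((J ∩ K.biUnion A).card : ℤ) = g K ∧ S ⊆ K.biUnion A := by
        intro S
        induction S using Finset.induction_on with
        | empty =>
          intro _
          refine ⟨∅, by simpa using hτpos, ?_, by simp⟩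
          simp [hg]
        | @insert a s ha ih =>
          intro hsub
          obtain ⟨K, hKτ, hKt, hKA⟩ := ih ((Finset.subset_insert a s).trans hsub)
          have haIJ : a ∈ I \ J := hsub (Finset.mem_insert_self a s)
          obtain ⟨Ka, haA, hKat⟩ := hblocked a haIJ
          have hKaτ : Ka.card < τ := hsmall Ka hKat
          have hKat' : ((J ∩ Ka.biUnion A).card : ℤ) = g Ka := by
            rw [hKat, hgbar, if_pos hKaτ]
          have hAu : (K ∪ Ka).biUnion A = K.biUnion A ∪ Ka.biUnion A := by
            ext x
            simp only [Finset.mem_biUnion, Finset.mem_union]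
            constructor
            · rintro ⟨j, hj | hj, hx⟩
              · exact Or.inl ⟨j, hj, hx⟩
              · exact Or.inr ⟨j, hj, hx⟩
            · rintro (⟨j, hj, hx⟩ | ⟨j, hj, hx⟩)
              · exact ⟨j, Or.inl hj, hx⟩
              · exact ⟨j, Or.inr hj, hx⟩
          have hAi : (K ∩ Ka).biUnion A ⊆ K.biUnion A ∩ Ka.biUnion A := by
            intro x hx
            simp only [Finset.mem_biUnion, Finset.mem_inter] at hx ⊢
            obtain ⟨j, hj, hxj⟩ := hx
            exact ⟨⟨j, hj.1, hxj⟩, ⟨j, hj.2, hxj⟩⟩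
          have hinterτ : (K ∩ Ka).card < τ :=
            lt_of_le_of_lt (Finset.card_le_card Finset.inter_subset_left) hKτ
          have hIbound : ((J ∩ (K ∩ Ka).biUnion A).card : ℤ) ≤ g (K ∩ Ka) := by
            have := hJind (K ∩ Ka)
            rwa [hgbar, if_pos hinterτ] at this
          have hmod := card_inter_modular' J (K.biUnion A) (Ka.biUnion A)
          have hL5 := card_inter_sub_bound' J hAi
          have hgid := gid K Ka
          have hcu : g (K ∪ Ka) ≤ ((J ∩ (K ∪ Ka).biUnion A).card : ℤ) := by
            rw [hAu]
            linarith
          by_cases hKuτ : (K ∪ Ka).card < τ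
          · refine ⟨K ∪ Ka, hKuτ, ?_, ?_⟩
            · have hle : ((J ∩ (K ∪ Ka).biUnion A).card : ℤ) ≤ g (K ∪ Ka) := by
                have := hJind (K ∪ Ka)
                rwa [hgbar, if_pos hKuτ] at this
              linarith
            · intro x hx
              rw [hAu, Finset.mem_union]
              rcases Finset.mem_insert.mp hx with rfl | hxs
              · exact Or.inr haA
              · exact Or.inl (hKA hxs)
          · exfalso
            push_neg at hKuτ
            have hcardle : (K ∪ Ka).card ≤ K.card + Ka.card := Finset.card_union_le K Ka
            have h2τ : ((K ∪ Ka).card : ℤ) ≤ 2 * (τ : ℤ) - 2 := by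
              omega
            have hd := hlarge2 (K ∪ Ka) hKuτ h2τ
            have hUcard : τ ≤ (Finset.univ : Finset (Fin k)).card :=
              le_trans hKuτ (Finset.card_le_univ _)
            have hgU : gbar (Finset.univ : Finset (Fin k)) = d := by
              rw [hgbar, if_neg (not_lt.mpr hUcard)]
            have hmono : ((J ∩ (K ∪ Ka).biUnion A).card : ℤ)
                ≤ ((J ∩ (Finset.univ : Finset (Fin k)).biUnion A).card : ℤ) := by
              exact_mod_cast Finset.card_le_card (Finset.inter_subset_inter_left
                (Finset.biUnion_subset_biUnion_of_subset_left A (Finset.subset_univ _)))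
            have hDle := hJind (Finset.univ : Finset (Fin k))
            rw [hgU] at hDle
            apply hUT
            rw [hgU]
            linarith
      obtain ⟨K, hKτ, hKt, hKA⟩ := hmain (I \ J) Finset.Subset.rfl
      have hIK : ((I ∩ K.biUnion A).card : ℤ) ≤ g K := by
        have := hIind K
        rwa [hgbar, if_pos hKτ] at this
      have hfin : (I ∩ K.biUnion A).card ≤ (J ∩ K.biUnion A).card := by
        have : ((I ∩ K.biUnion A).card : ℤ) ≤ ((J ∩ K.biUnion A).card : ℤ) := by
          rw [hKt]; exact hIK
        exact_mod_cast this
      have := count_aux' I J _ hKA hfin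
      omega
end

section
/- Let f : 2^[n] → {0,1} be a monotone submodular function with f(∅) = 0. Then f is a monotone disjunction: there exists X ⊆ [n] such that f(S) = 1 if S ∩ X ≠ ∅ and f(S) = 0 otherwise. -/
theorem stmt_8 (n : ℕ) (f : Finset (Fin n) → ℝ)
    (hbool : ∀ S, f S = 0 ∨ f S = 1)
    (hmono : ∀ S T : Finset (Fin n), S ⊆ T → f S ≤ f T)
    (hsub : ∀ (S T : Finset (Fin n)) (x : Fin n), S ⊆ T →
      f (insert x T) - f T ≤ f (insert x S) - f S)
    (h0 : f ∅ = 0) :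
    ∃ X : Finset (Fin n), ∀ S : Finset (Fin n),
      f S = if (S ∩ X).Nonempty then 1 else 0 := by
  refine ⟨Finset.univ.filter (fun x => f {x} = 1), fun S => ?_⟩
  split_ifs with h
  · obtain ⟨x, hx⟩ := h
    simp only [Finset.mem_inter, Finset.mem_filter, Finset.mem_univ, true_and] at hx
    have h1 : f {x} ≤ f S := hmono _ _ (Finset.singleton_subset_iff.2 hx.1)
    rw [hx.2] at h1
    rcases hbool S with h2 | h2
    · linarith
    · exact h2
  · -- all elements of S have f {x} = 0
    have hz : ∀ x ∈ S, f {x} = 0 := by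
      intro x hx
      rcases hbool {x} with h1 | h1
      · exact h1
      · exact absurd ⟨x, Finset.mem_inter.2 ⟨hx, by simp [h1]⟩⟩ h
    clear h
    induction S using Finset.induction_on with
    | empty => exact h0
    | @insert a s ha ih =>
      have key := hsub ∅ s a (Finset.empty_subset s)
      rw [h0] at key
      have hs : f s = 0 := ih (fun x hx => hz x (Finset.mem_insert_of_mem hx))
      have ha1 : f {a} = 0 := hz a (Finset.mem_insert_self a s)
      have : f {a} = f (insert a (∅ : Finset (Fin n))) := by simp
      rw [this] at ha1
      have hle : f (insert a s) ≤ 0 := by linarith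
      have hge : 0 ≤ f (insert a s) := by
        rw [← h0]; exact hmono _ _ (Finset.empty_subset _)
      linarith
end

section
/- Let f : 2^[n] → ℝ≥0 be nonnegative, monotone, submodular, and 1-Lipschitz, and let X have a product distribution on subsets of [n]. For any 0 ≤ α ≤ 1, if E[f(X)] ≥ 240/α, then P[ |f(X) − E[f(X)]| > α·E[f(X)] ] ≤ 4·exp(−α²·E[f(X)]/16). -/
/-!
On the cube `Fin n → Bool`, put `F x = f {i | x i}`. Monotonicity, submodularity and the
Lipschitz condition say that every marginal `F (x[i ↦ 1]) - F (x[i ↦ 0])` lies in `[0, 1]` and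
decreases in `x`. Splitting off one coordinate, convexity of `exp` bounds the tilted mean of
`F (1, ·) = F (0, ·) + g` by that of `F (0, ·)` times `1 + (eˡ - 1) E g`, once the Harris inequality
is used to decouple `exp (l F (0, ·))` from the antitone marginal `g`. Induction on `n` then gives
the Poisson-type moment bound `E exp (l F) ≤ exp ((eˡ - 1) E F)`, and Chernoff's bound at
`l = ± α / 2` controls each tail by `exp (-α² E F / 16)`.
-/

open MeasureTheory ProbabilityTheory Real

lemma exp_mul_le_one_add_mul {l t : ℝ} (h0 : 0 ≤ t) (h1 : t ≤ 1) :
    exp (l * t) ≤ 1 + (exp l - 1) * t := by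
  have := convexOn_exp.2 (Set.mem_univ 0) (Set.mem_univ l) (sub_nonneg.2 h1) h0 (by ring)
  simp only [smul_eq_mul, mul_zero, zero_add, exp_zero] at this
  rw [mul_comm] at this
  linarith

lemma Finset.sub_le_sub_of_submodular {ι : Type*} [DecidableEq ι] {f : Finset ι → ℝ}
    (hsub : ∀ A B, f (A ∪ B) + f (A ∩ B) ≤ f A + f B) {s t : Finset ι} {i : ι} (hst : s ⊆ t)
    (hi : i ∉ t) : f (insert i t) - f t ≤ f (insert i s) - f s := by
  have h := hsub (insert i s) t
  rw [Finset.insert_union, Finset.union_eq_right.2 hst, Finset.insert_inter_of_notMem hi,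
    Finset.inter_eq_left.2 hst] at h
  linarith

lemma measureReal_false_add_measureReal_true (ν : Measure Bool) [IsProbabilityMeasure ν] :
    ν.real {false} + ν.real {true} = 1 := by
  have h : ({false}ᶜ : Set Bool) = {true} := by ext b; simp
  rw [← h, measureReal_add_measureReal_compl (measurableSet_singleton _), probReal_univ]

section PoissonTail

variable {Ω : Type*} [MeasurableSpace Ω] {μ : Measure Ω} [IsFiniteMeasure μ] {X : Ω → ℝ}
  {m α : ℝ}

theorem measureReal_ge_le_of_mgf_le (hm : 0 ≤ m) (hα₀ : 0 ≤ α) (hα₁ : α ≤ 1)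
    (hint : Integrable (fun ω => exp (α / 2 * X ω)) μ)
    (hmgf : mgf X μ (α / 2) ≤ exp ((exp (α / 2) - 1) * m)) :
    μ.real {ω | (1 + α) * m ≤ X ω} ≤ exp (-(α ^ 2 * m) / 16) := by
  have hexp : exp (α / 2) - 1 - α / 2 ≤ (α / 2) ^ 2 :=
    (abs_le.1 (abs_exp_sub_one_sub_id_le (by rw [abs_le]; constructor <;> linarith))).2
  calc μ.real {ω | (1 + α) * m ≤ X ω}
      ≤ exp (-(α / 2) * ((1 + α) * m)) * mgf X μ (α / 2) :=
        measure_ge_le_exp_mul_mgf _ (by linarith) hint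
    _ ≤ exp (-(α / 2) * ((1 + α) * m)) * exp ((exp (α / 2) - 1) * m) := by gcongr
    _ ≤ exp (-(α ^ 2 * m) / 16) := by
        rw [← exp_add]
        exact exp_le_exp.2 (by nlinarith [mul_le_mul_of_nonneg_right hexp hm, sq_nonneg α])

theorem measureReal_le_le_of_mgf_le (hm : 0 ≤ m) (hα₀ : 0 ≤ α) (hα₁ : α ≤ 1)
    (hint : Integrable (fun ω => exp (-(α / 2) * X ω)) μ)
    (hmgf : mgf X μ (-(α / 2)) ≤ exp ((exp (-(α / 2)) - 1) * m)) :
    μ.real {ω | X ω ≤ (1 - α) * m} ≤ exp (-(α ^ 2 * m) / 16) := by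
  have hexp : exp (-(α / 2)) - 1 - -(α / 2) ≤ (-(α / 2)) ^ 2 :=
    (abs_le.1 (abs_exp_sub_one_sub_id_le (by rw [abs_le]; constructor <;> linarith))).2
  calc μ.real {ω | X ω ≤ (1 - α) * m}
      ≤ exp (-(-(α / 2)) * ((1 - α) * m)) * mgf X μ (-(α / 2)) :=
        measure_le_le_exp_mul_mgf _ (by linarith) hint
    _ ≤ exp (-(-(α / 2)) * ((1 - α) * m)) * exp ((exp (-(α / 2)) - 1) * m) := by gcongr
    _ ≤ exp (-(α ^ 2 * m) / 16) := by
        rw [← exp_add]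
        exact exp_le_exp.2 (by nlinarith [mul_le_mul_of_nonneg_right hexp hm, sq_nonneg α])

theorem measure_abs_sub_gt_le_of_mgf_le (hm : 0 ≤ m) (hα₀ : 0 ≤ α) (hα₁ : α ≤ 1)
    (hint : ∀ t, Integrable (fun ω => exp (t * X ω)) μ)
    (hmgf : ∀ t, mgf X μ t ≤ exp ((exp t - 1) * m)) :
    μ {ω | α * m < |X ω - m|} ≤ ENNReal.ofReal (2 * exp (-(α ^ 2 * m) / 16)) := by
  have hsplit :
      {ω | α * m < |X ω - m|} ⊆ {ω | (1 + α) * m ≤ X ω} ∪ {ω | X ω ≤ (1 - α) * m} := by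
    intro ω (hω : α * m < |X ω - m|)
    rcases lt_abs.1 hω with h | h
    · exact Or.inl (show (1 + α) * m ≤ X ω by linarith)
    · exact Or.inr (show X ω ≤ (1 - α) * m by linarith)
  calc μ {ω | α * m < |X ω - m|}
      ≤ μ {ω | (1 + α) * m ≤ X ω} + μ {ω | X ω ≤ (1 - α) * m} :=
        (measure_mono hsplit).trans (measure_union_le _ _)
    _ = ENNReal.ofReal (μ.real {ω | (1 + α) * m ≤ X ω} + μ.real {ω | X ω ≤ (1 - α) * m}) := by
        rw [ENNReal.ofReal_add measureReal_nonneg measureReal_nonneg, ofReal_measureReal,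
          ofReal_measureReal]
    _ ≤ ENNReal.ofReal (2 * exp (-(α ^ 2 * m) / 16)) := by
        gcongr
        linarith [measureReal_ge_le_of_mgf_le hm hα₀ hα₁ (hint _) (hmgf _),
          measureReal_le_le_of_mgf_le hm hα₀ hα₁ (hint _) (hmgf _)]

end PoissonTail

namespace BooleanCube

variable {n : ℕ}

theorem integral_pi_succ (p : Fin (n + 1) → Measure Bool) [∀ i, IsProbabilityMeasure (p i)]
    (g : (Fin (n + 1) → Bool) → ℝ) :
    ∫ x, g x ∂Measure.pi p =
      (p 0).real {false} * ∫ y, g (Fin.cons false y) ∂Measure.pi (fun i => p i.succ) +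
      (p 0).real {true} * ∫ y, g (Fin.cons true y) ∂Measure.pi (fun i => p i.succ) := by
  rw [← (measurePreserving_piFinSuccAbove p 0).symm.integral_comp',
    integral_prod _ .of_finite, integral_fintype .of_finite]
  simp [MeasurableEquiv.piFinSuccAbove, Fin.consEquiv, add_comm]

theorem integral_pi_zero (p : Fin 0 → Measure Bool) (g : (Fin 0 → Bool) → ℝ) :
    ∫ x, g x ∂Measure.pi p = g default := by
  rw [Measure.pi_of_empty p default, integral_dirac]

lemma monotone_cons (c : Bool) :
    Monotone fun x : Fin n → Bool => (Fin.cons c x : Fin (n + 1) → Bool) :=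
  fun _ _ h => Fin.cons_le_cons.2 ⟨le_rfl, h⟩

lemma cons_false_le_cons_true (x : Fin n → Bool) :
    (Fin.cons false x : Fin (n + 1) → Bool) ≤ Fin.cons true x :=
  Fin.cons_le_cons.2 ⟨Bool.false_le true, le_rfl⟩

/-- The Harris inequality. -/
theorem integral_mul_integral_le_integral_mul (p : Fin n → Measure Bool)
    [∀ i, IsProbabilityMeasure (p i)] {f g : (Fin n → Bool) → ℝ} (hf : Monotone f)
    (hg : Monotone g) :
    (∫ x, f x ∂Measure.pi p) * (∫ x, g x ∂Measure.pi p) ≤ ∫ x, f x * g x ∂Measure.pi p := by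
  induction n with
  | zero => simp only [integral_pi_zero, le_refl]
  | succ n ih =>
    have ih₀ := ih (fun i => p i.succ) (hf.comp (monotone_cons false))
      (hg.comp (monotone_cons false))
    have ih₁ := ih (fun i => p i.succ) (hf.comp (monotone_cons true))
      (hg.comp (monotone_cons true))
    have hf₀₁ : ∫ y, f (Fin.cons false y) ∂Measure.pi (fun i : Fin n => p i.succ) ≤
        ∫ y, f (Fin.cons true y) ∂Measure.pi (fun i : Fin n => p i.succ) :=
      integral_mono .of_finite .of_finite fun y => hf (cons_false_le_cons_true y)
    have hg₀₁ : ∫ y, g (Fin.cons false y) ∂Measure.pi (fun i : Fin n => p i.succ) ≤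
        ∫ y, g (Fin.cons true y) ∂Measure.pi (fun i : Fin n => p i.succ) :=
      integral_mono .of_finite .of_finite fun y => hg (cons_false_le_cons_true y)
    simp only [integral_pi_succ p, Function.comp_apply] at ih₀ ih₁ ⊢
    have ha := measureReal_nonneg (μ := p 0) (s := {false})
    have hb := measureReal_nonneg (μ := p 0) (s := {true})
    rw [show (p 0).real {true} = 1 - (p 0).real {false} by
      linarith [measureReal_false_add_measureReal_true (p 0)]] at hb ⊢
    -- the covariance is at least `a (1 - a) (∫ f₁ - ∫ f₀) (∫ g₁ - ∫ g₀) ≥ 0`, `a = p 0 {false}`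
    nlinarith [mul_le_mul_of_nonneg_left ih₀ ha, mul_le_mul_of_nonneg_left ih₁ hb,
      mul_nonneg (mul_nonneg ha hb) (mul_nonneg (sub_nonneg.2 hf₀₁) (sub_nonneg.2 hg₀₁))]

theorem integral_mul_le_integral_mul_integral (p : Fin n → Measure Bool)
    [∀ i, IsProbabilityMeasure (p i)] {f g : (Fin n → Bool) → ℝ} (hf : Monotone f)
    (hg : Antitone g) :
    ∫ x, f x * g x ∂Measure.pi p ≤ (∫ x, f x ∂Measure.pi p) * (∫ x, g x ∂Measure.pi p) := by
  simpa [integral_neg] using integral_mul_integral_le_integral_mul p hf hg.neg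

theorem integral_mul_integral_le_integral_mul_of_antitone (p : Fin n → Measure Bool)
    [∀ i, IsProbabilityMeasure (p i)] {f g : (Fin n → Bool) → ℝ} (hf : Antitone f)
    (hg : Antitone g) :
    (∫ x, f x ∂Measure.pi p) * (∫ x, g x ∂Measure.pi p) ≤ ∫ x, f x * g x ∂Measure.pi p := by
  simpa [integral_neg] using integral_mul_integral_le_integral_mul p hf.neg hg.neg

lemma mul_integral_exp_mul_mul_le (p : Fin n → Measure Bool) [∀ i, IsProbabilityMeasure (p i)]
    {h g : (Fin n → Bool) → ℝ} (hh : Monotone h) (hg : Antitone g) (l : ℝ) :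
    (exp l - 1) * ∫ x, exp (l * h x) * g x ∂Measure.pi p ≤
      (exp l - 1) * ((∫ x, exp (l * h x) ∂Measure.pi p) * ∫ x, g x ∂Measure.pi p) := by
  rcases le_total 0 l with hl | hl
  · refine mul_le_mul_of_nonneg_left (integral_mul_le_integral_mul_integral p ?_ hg) ?_
    · exact fun x y hxy => exp_le_exp.2 (mul_le_mul_of_nonneg_left (hh hxy) hl)
    · linarith [add_one_le_exp l]
  · refine mul_le_mul_of_nonpos_left
      (integral_mul_integral_le_integral_mul_of_antitone p ?_ hg) ?_
    · exact fun x y hxy => exp_le_exp.2 (mul_le_mul_of_nonpos_left (hh hxy) hl)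
    · linarith [exp_le_one_iff.2 hl]

lemma integral_exp_mul_add_le (p : Fin n → Measure Bool) [∀ i, IsProbabilityMeasure (p i)]
    {h g : (Fin n → Bool) → ℝ} (hh : Monotone h) (hg : Antitone g) (hg₀ : ∀ x, 0 ≤ g x)
    (hg₁ : ∀ x, g x ≤ 1) (l : ℝ) :
    ∫ x, exp (l * (h x + g x)) ∂Measure.pi p ≤
      (∫ x, exp (l * h x) ∂Measure.pi p) * (1 + (exp l - 1) * ∫ x, g x ∂Measure.pi p) := by
  calc ∫ x, exp (l * (h x + g x)) ∂Measure.pi p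
      ≤ ∫ x, exp (l * h x) + (exp l - 1) * (exp (l * h x) * g x) ∂Measure.pi p := by
        refine integral_mono .of_finite .of_finite fun x => ?_
        rw [mul_add, exp_add]
        nlinarith [exp_mul_le_one_add_mul (l := l) (hg₀ x) (hg₁ x), exp_pos (l * h x)]
    _ = (∫ x, exp (l * h x) ∂Measure.pi p) +
          (exp l - 1) * ∫ x, exp (l * h x) * g x ∂Measure.pi p := by
        rw [integral_add .of_finite .of_finite, integral_const_mul]
    _ ≤ _ := by
        linarith [mul_integral_exp_mul_mul_le p hh hg l]

def marginal (F : (Fin n → Bool) → ℝ) (i : Fin n) (x : Fin n → Bool) : ℝ :=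
  F (Function.update x i true) - F (Function.update x i false)

lemma marginal_cons (F : (Fin (n + 1) → Bool) → ℝ) (c : Bool) (i : Fin n) :
    marginal (fun y => F (Fin.cons c y)) i = fun x => marginal F i.succ (Fin.cons c x) := by
  ext x
  simp only [marginal, Fin.cons_update]

lemma marginal_zero_cons (F : (Fin (n + 1) → Bool) → ℝ) (c : Bool) (x : Fin n → Bool) :
    marginal F 0 (Fin.cons c x) = F (Fin.cons true x) - F (Fin.cons false x) := by
  simp only [marginal, Fin.update_cons_zero]

/-- Submodularity appears as diminishing returns: every marginal is antitone. -/
structure IsMonotoneSubmodularLipschitz (F : (Fin n → Bool) → ℝ) : Prop where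
  monotone : Monotone F
  marginal_le_one : ∀ i x, marginal F i x ≤ 1
  antitone_marginal : ∀ i, Antitone (marginal F i)

lemma IsMonotoneSubmodularLipschitz.cons {F : (Fin (n + 1) → Bool) → ℝ}
    (hF : IsMonotoneSubmodularLipschitz F) (c : Bool) :
    IsMonotoneSubmodularLipschitz fun y => F (Fin.cons c y) where
  monotone := hF.monotone.comp (monotone_cons c)
  marginal_le_one i y := by
    rw [marginal_cons]; exact hF.marginal_le_one i.succ _
  antitone_marginal i := by
    rw [marginal_cons]; exact (hF.antitone_marginal i.succ).comp_monotone (monotone_cons c)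

theorem integral_exp_mul_le_exp (p : Fin n → Measure Bool) [∀ i, IsProbabilityMeasure (p i)]
    {F : (Fin n → Bool) → ℝ} (hF₀ : ∀ x, 0 ≤ F x) (hF : IsMonotoneSubmodularLipschitz F)
    (l : ℝ) :
    ∫ x, exp (l * F x) ∂Measure.pi p ≤ exp ((exp l - 1) * ∫ x, F x ∂Measure.pi p) := by
  induction n with
  | zero =>
    simp only [integral_pi_zero]
    exact exp_le_exp.2 (mul_le_mul_of_nonneg_right (by linarith [add_one_le_exp l]) (hF₀ _))
  | succ n ih =>
    set F₀ : (Fin n → Bool) → ℝ := fun y => F (Fin.cons false y)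
    set g : (Fin n → Bool) → ℝ := fun y => marginal F 0 (Fin.cons false y)
    have hF₁ : ∀ y, F (Fin.cons true y) = F₀ y + g y := fun y => by
      simp only [F₀, g, marginal_zero_cons]; ring
    have hg₀ : ∀ y, 0 ≤ g y := fun y => by
      simpa [g, marginal_zero_cons] using hF.monotone (cons_false_le_cons_true y)
    have hg : Antitone g := (hF.antitone_marginal 0).comp_monotone (monotone_cons false)
    have ih₀ := ih (fun i => p i.succ) (fun y => hF₀ _) (hF.cons false)
    have htrue := integral_exp_mul_add_le (fun i => p i.succ) (hF.cons false).monotone hg hg₀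
      (fun y => hF.marginal_le_one 0 _) l
    have hsum := measureReal_false_add_measureReal_true (p 0)
    have hb := measureReal_nonneg (μ := p 0) (s := {true})
    simp only [integral_pi_succ p, hF₁]
    rw [integral_add .of_finite .of_finite]
    set ν := Measure.pi fun i : Fin n => p i.succ
    set A := ∫ y, exp (l * F₀ y) ∂ν
    set G := ∫ y, g y ∂ν
    set b := (p 0).real {true}
    calc (p 0).real {false} * A + b * ∫ y, exp (l * (F₀ y + g y)) ∂ν
        ≤ A * (1 + b * (exp l - 1) * G) := by
          linear_combination mul_le_mul_of_nonneg_left htrue hb + A * hsum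
      _ ≤ A * exp (b * (exp l - 1) * G) :=
          mul_le_mul_of_nonneg_left (by linarith [add_one_le_exp (b * (exp l - 1) * G)])
            (integral_nonneg fun _ => (exp_pos _).le)
      _ ≤ exp ((exp l - 1) * ∫ y, F₀ y ∂ν) * exp (b * (exp l - 1) * G) :=
          mul_le_mul_of_nonneg_right ih₀ (exp_pos _).le
      _ = exp ((exp l - 1) * ((p 0).real {false} * ∫ y, F₀ y ∂ν + b * ((∫ y, F₀ y ∂ν) + G))) := by
          rw [← exp_add]
          congr 1
          linear_combination (1 - exp l) * (∫ y, F₀ y ∂ν) * hsum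

lemma monotone_filter_eq_true :
    Monotone fun x : Fin n → Bool => Finset.univ.filter (x · = true) := by
  intro x y hxy i
  simp only [Finset.mem_filter, Finset.mem_univ, true_and]
  intro hx
  have := hxy i
  rw [hx] at this
  exact top_le_iff.1 this

lemma filter_update_true (x : Fin n → Bool) (i : Fin n) :
    Finset.univ.filter (Function.update x i true · = true) =
      insert i (Finset.univ.filter (Function.update x i false · = true)) := by
  ext j
  rcases eq_or_ne j i with rfl | hj <;> simp [*]

lemma marginal_filter_eq_true (f : Finset (Fin n) → ℝ) (x : Fin n → Bool) (i : Fin n) :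
    marginal (fun x => f (Finset.univ.filter (x · = true))) i x =
      f (insert i (Finset.univ.filter (Function.update x i false · = true))) -
        f (Finset.univ.filter (Function.update x i false · = true)) := by
  rw [marginal, filter_update_true]

lemma isMonotoneSubmodularLipschitz_filter_eq_true {f : Finset (Fin n) → ℝ}
    (hmono : ∀ S T, S ⊆ T → f S ≤ f T)
    (hsub : ∀ A B, f (A ∪ B) + f (A ∩ B) ≤ f A + f B)
    (hlip : ∀ S i, |f (insert i S) - f S| ≤ 1) :
    IsMonotoneSubmodularLipschitz fun x : Fin n → Bool => f (Finset.univ.filter (x · = true)) where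
  monotone x y hxy := hmono _ _ (monotone_filter_eq_true hxy)
  marginal_le_one i x := by
    rw [marginal_filter_eq_true]; exact (abs_le.1 (hlip _ i)).2
  antitone_marginal i x y hxy := by
    simp only [marginal_filter_eq_true]
    exact Finset.sub_le_sub_of_submodular hsub
      (monotone_filter_eq_true (update_le_update_iff.2 ⟨le_rfl, fun j _ => hxy j⟩)) (by simp)

end BooleanCube

open BooleanCube

theorem stmt_10_general (n : ℕ) (f : Finset (Fin n) → ℝ)
    (hnn : ∀ S, 0 ≤ f S)
    (hmono : ∀ S T : Finset (Fin n), S ⊆ T → f S ≤ f T)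
    (hsub : ∀ A B : Finset (Fin n), f (A ∪ B) + f (A ∩ B) ≤ f A + f B)
    (hlip : ∀ (S : Finset (Fin n)) (x : Fin n), |f (insert x S) - f S| ≤ 1)
    (p : Fin n → Measure Bool) [∀ i, IsProbabilityMeasure (p i)]
    (α : ℝ) (hα0 : 0 ≤ α) (hα1 : α ≤ 1)
    (E : ℝ)
    (hE : E = ∫ x, f (Finset.univ.filter (fun i => x i = true)) ∂(Measure.pi p)) :
    (Measure.pi p) {x | α * E < |f (Finset.univ.filter (fun i => x i = true)) - E|}
      ≤ ENNReal.ofReal (4 * Real.exp (-(α ^ 2 * E) / 16)) := by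
  set F : (Fin n → Bool) → ℝ := fun x => f (Finset.univ.filter (x · = true))
  have hmgf : ∀ t, mgf F (Measure.pi p) t ≤ exp ((exp t - 1) * E) := fun t =>
    hE ▸ integral_exp_mul_le_exp p (fun _ => hnn _)
      (isMonotoneSubmodularLipschitz_filter_eq_true hmono hsub hlip) t
  have hE₀ : 0 ≤ E := hE ▸ integral_nonneg fun _ => hnn _
  calc (Measure.pi p) {x | α * E < |F x - E|}
      ≤ ENNReal.ofReal (2 * exp (-(α ^ 2 * E) / 16)) :=
        measure_abs_sub_gt_le_of_mgf_le hE₀ hα0 hα1 (fun _ => .of_finite) hmgf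
    _ ≤ ENNReal.ofReal (4 * exp (-(α ^ 2 * E) / 16)) := by
        gcongr
        norm_num

theorem stmt_10 (n : ℕ) (f : Finset (Fin n) → ℝ)
    (hnn : ∀ S, 0 ≤ f S)
    (hmono : ∀ S T : Finset (Fin n), S ⊆ T → f S ≤ f T)
    (hsub : ∀ A B : Finset (Fin n), f (A ∪ B) + f (A ∩ B) ≤ f A + f B)
    (hlip : ∀ (S : Finset (Fin n)) (x : Fin n), |f (insert x S) - f S| ≤ 1)
    (p : Fin n → Measure Bool) [∀ i, IsProbabilityMeasure (p i)]
    (α : ℝ) (hα0 : 0 ≤ α) (hα1 : α ≤ 1)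
    (E : ℝ)
    (hE : E = ∫ x, f (Finset.univ.filter (fun i => x i = true)) ∂(Measure.pi p))
    (hbig : 240 / α ≤ E) :
    (Measure.pi p) {x | α * E < |f (Finset.univ.filter (fun i => x i = true)) - E|}
      ≤ ENNReal.ofReal (4 * Real.exp (-(α ^ 2 * E) / 16)) :=
  stmt_10_general n f hnn hmono hsub hlip p α hα0 hα1 E hE
end

section
/- Let f : 2^[n] → ℝ be submodular and let F : [0,1]^n → ℝ be its multilinear extension, F(y) = E[f(ŷ)] where ŷ includes coordinate i independently with probability yᵢ. Then the univariate function h'(p) = F(p, p, …, p) is concave on [0,1]. -/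
/-!
Write `h(p) = ∑_{S ⊆ s} f S p^|S| (1-p)^(|s|-|S|)`, the multilinear extension of `f` on the
diagonal. Differentiating term by term and regrouping, `h'` is the sum over `i ∈ s` of the same
expression on `s \ {i}` for the marginal `T ↦ f (T ∪ {i}) - f T`: this is the chain rule
`d/dp F(p,…,p) = ∑ ∂ᵢF`. Applied twice, `h''` becomes a nonnegative combination of the mixed
differences `f (T ∪ {i,j}) - f (T ∪ {i}) - f (T ∪ {j}) + f T` with `i ≠ j`, all of which are
nonpositive by submodularity.
-/

open Finset

theorem hasDerivAt_pow_mul_one_sub_pow (k m : ℕ) (p : ℝ) :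
    HasDerivAt (fun x : ℝ => x ^ k * (1 - x) ^ m)
      (k * p ^ (k - 1) * (1 - p) ^ m - m * p ^ k * (1 - p) ^ (m - 1)) p := by
  have hone_sub : HasDerivAt (fun x : ℝ => (1 - x) ^ m) (m * (1 - p) ^ (m - 1) * (0 - 1)) p :=
    ((hasDerivAt_const p 1).sub (hasDerivAt_id p)).pow m
  exact ((hasDerivAt_pow k p).mul hone_sub).congr_deriv (by ring)

variable {α : Type*}

noncomputable def multilinearDiag (s : Finset α) (f : Finset α → ℝ) (p : ℝ) : ℝ :=
  ∑ S ∈ s.powerset, f S * p ^ S.card * (1 - p) ^ (s.card - S.card)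

theorem multilinearDiag_nonpos {s : Finset α} {f : Finset α → ℝ} (hf : ∀ S ⊆ s, f S ≤ 0)
    {p : ℝ} (hp : p ∈ Set.Icc (0 : ℝ) 1) : multilinearDiag s f p ≤ 0 :=
  sum_nonpos fun S hS => mul_nonpos_of_nonpos_of_nonneg
    (mul_nonpos_of_nonpos_of_nonneg (hf S (mem_powerset.1 hS)) (pow_nonneg hp.1 _))
    (pow_nonneg (sub_nonneg.2 hp.2) _)

variable [DecidableEq α]

theorem sum_sum_powerset_erase_insert {M : Type*} [AddCommMonoid M] (s : Finset α)
    (g : α → Finset α → M) :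
    ∑ i ∈ s, ∑ T ∈ (s.erase i).powerset, g i (insert i T) =
      ∑ S ∈ s.powerset, ∑ i ∈ S, g i S := by
  rw [sum_comm' (t' := s) (s' := fun i => s.powerset.filter (i ∈ ·)) (fun S i => by
    simp only [mem_powerset, mem_filter]
    exact ⟨fun h => ⟨⟨h.1, h.2⟩, h.1 h.2⟩, fun h => ⟨h.1.1, h.1.2⟩⟩)]
  refine sum_congr rfl fun i hi => ?_
  refine sum_nbij' (insert i) (fun S => S.erase i) ?_ ?_ ?_ ?_ (fun _ _ => rfl)
  · intro T hT
    simp only [mem_powerset, mem_filter] at hT ⊢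
    exact ⟨insert_subset hi (hT.trans (erase_subset i s)), mem_insert_self i T⟩
  · intro S hS
    simp only [mem_powerset, mem_filter] at hS ⊢
    exact erase_subset_erase i hS.1
  · intro T hT
    simp only [mem_powerset] at hT
    exact erase_insert fun h => by simpa using hT h
  · intro S hS
    simp only [mem_filter] at hS
    exact insert_erase hS.2

theorem sum_sum_powerset_erase {M : Type*} [AddCommMonoid M] (s : Finset α)
    (g : α → Finset α → M) :
    ∑ i ∈ s, ∑ T ∈ (s.erase i).powerset, g i T = ∑ T ∈ s.powerset, ∑ i ∈ s \ T, g i T :=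
  sum_comm' fun i T => by
    simp only [mem_powerset, mem_sdiff, subset_erase]
    tauto

def marginal (f : Finset α → ℝ) (i : α) (T : Finset α) : ℝ :=
  f (insert i T) - f T

theorem marginal_marginal_nonpos {f : Finset α → ℝ}
    (hsub : ∀ A B : Finset α, f (A ∪ B) + f (A ∩ B) ≤ f A + f B) {i j : α} (hij : i ≠ j)
    (T : Finset α) : marginal (marginal f i) j T ≤ 0 := by
  have hunion : insert i T ∪ insert j T = insert i (insert j T) := by
    ext; simp only [mem_union, mem_insert]; tauto
  have hinter : insert i T ∩ insert j T = T := by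
    ext a; simp only [mem_inter, mem_insert]; constructor
    · rintro ⟨rfl | ha, rfl | ha'⟩ <;> first | exact absurd rfl hij | assumption
    · exact fun ha => ⟨Or.inr ha, Or.inr ha⟩
  have := hsub (insert i T) (insert j T)
  rw [hunion, hinter] at this
  simp only [marginal]
  linarith

theorem hasDerivAt_multilinearDiag (s : Finset α) (f : Finset α → ℝ) (p : ℝ) :
    HasDerivAt (multilinearDiag s f)
      (∑ i ∈ s, multilinearDiag (s.erase i) (marginal f i) p) p := by
  set m := s.card
  have hterm : ∀ S ∈ s.powerset, HasDerivAt (fun x => f S * x ^ S.card * (1 - x) ^ (m - S.card))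
      (S.card * (f S * p ^ (S.card - 1) * (1 - p) ^ (m - S.card))
        - (m - S.card : ℕ) * (f S * p ^ S.card * (1 - p) ^ (m - S.card - 1))) p := fun S _ => by
    simpa only [mul_assoc, mul_sub, mul_left_comm (f S)] using
      (hasDerivAt_pow_mul_one_sub_pow S.card (m - S.card) p).const_mul (f S)
  refine (HasDerivAt.fun_sum hterm).congr_deriv ?_
  have hmarginal : ∀ i ∈ s, multilinearDiag (s.erase i) (marginal f i) p =
      ∑ T ∈ (s.erase i).powerset, f (insert i T) * p ^ ((insert i T).card - 1) *
        (1 - p) ^ (m - (insert i T).card) -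
      ∑ T ∈ (s.erase i).powerset, f T * p ^ T.card * (1 - p) ^ (m - T.card - 1) := by
    intro i hi
    rw [multilinearDiag, ← sum_sub_distrib]
    refine sum_congr rfl fun T hT => ?_
    have hiT : i ∉ T := fun h => by simpa using mem_powerset.1 hT h
    rw [card_insert_of_notMem hiT, card_erase_of_mem hi, marginal, Nat.add_sub_cancel,
      Nat.sub_sub, Nat.sub_sub, add_comm 1]
    ring
  rw [sum_congr rfl hmarginal, sum_sub_distrib (s := s),
    sum_sum_powerset_erase_insert
      (g := fun (_ : α) S => f S * p ^ (S.card - 1) * (1 - p) ^ (m - S.card)),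
    sum_sum_powerset_erase, ← sum_sub_distrib]
  refine sum_congr rfl fun S hS => ?_
  rw [sum_const, sum_const, card_sdiff_of_subset (mem_powerset.1 hS), nsmul_eq_mul, nsmul_eq_mul]

theorem concaveOn_multilinearDiag (s : Finset α) {f : Finset α → ℝ}
    (hsub : ∀ A B : Finset α, f (A ∪ B) + f (A ∩ B) ≤ f A + f B) :
    ConcaveOn ℝ (Set.Icc 0 1) (multilinearDiag s f) := by
  have hderiv := hasDerivAt_multilinearDiag s f
  refine concaveOn_of_hasDerivWithinAt2_nonpos (convex_Icc 0 1)
    (f' := fun p => ∑ i ∈ s, multilinearDiag (s.erase i) (marginal f i) p)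
    (f'' := fun p => ∑ i ∈ s, ∑ j ∈ s.erase i,
      multilinearDiag ((s.erase i).erase j) (marginal (marginal f i) j) p)
    (Differentiable.continuous fun p => (hderiv p).differentiableAt).continuousOn
    (fun p _ => (hderiv p).hasDerivWithinAt)
    (fun p _ => (HasDerivAt.fun_sum fun i _ =>
      hasDerivAt_multilinearDiag (s.erase i) (marginal f i) p).hasDerivWithinAt)
    fun p hp => sum_nonpos fun i _ => sum_nonpos fun j hj => multilinearDiag_nonpos
      (fun T _ => marginal_marginal_nonpos hsub (ne_of_mem_erase hj).symm T)
      (interior_subset hp)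

theorem stmt_13 (n : ℕ) (f : Finset (Fin n) → ℝ)
    (hsub : ∀ A B : Finset (Fin n), f (A ∪ B) + f (A ∩ B) ≤ f A + f B)
    (h' : ℝ → ℝ)
    (hh' : ∀ p : ℝ, h' p = ∑ S : Finset (Fin n), f S * p ^ S.card * (1 - p) ^ (n - S.card)) :
    ConcaveOn ℝ (Set.Icc (0 : ℝ) 1) h' := by
  have hdiag : h' = multilinearDiag univ f := by
    funext p
    rw [hh', multilinearDiag, powerset_univ, card_univ, Fintype.card_fin]
  exact hdiag ▸ concaveOn_multilinearDiag univ hsub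
end

section
/- Let M = ([n], ℐ) be a paving matroid of rank m (every circuit has cardinality m or m+1). Then there exists a family 𝒜 = {A₁, …, A_k} of subsets of [n] such that ℐ = { I : |I| ≤ m and |I ∩ Aᵢ| ≤ m−1 for all i } and |Aᵢ ∩ A_j| ≤ m−2 for all i ≠ j. -/
theorem stmt_15 (n m : ℕ) (Indep : Finset (Fin n) → Prop)
    (hM : IsMatroidIndepFamily Indep)
    (hrank_le : ∀ I, Indep I → I.card ≤ m)
    (hrank_eq : ∃ I, Indep I ∧ I.card = m)
    (hpaving : ∀ C : Finset (Fin n), ¬ Indep C → (∀ C' ⊂ C, Indep C') →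
      C.card = m ∨ C.card = m + 1) :
    ∃ (k : ℕ) (A : Fin k → Finset (Fin n)),
      (∀ I : Finset (Fin n), Indep I ↔
        I.card ≤ m ∧ ∀ i : Fin k, ((I ∩ A i).card : ℤ) ≤ (m : ℤ) - 1) ∧
      (∀ i j : Fin k, i ≠ j → ((A i ∩ A j).card : ℤ) ≤ (m : ℤ) - 2) := by
  classical
  obtain ⟨⟨I0, hI0⟩, hdown, hexch⟩ := hM
  have hempty : Indep ∅ := hdown I0 ∅ (Finset.empty_subset _) hI0
  -- every dependent set contains a minimal dependent set (a circuit)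
  have hmin : ∀ I : Finset (Fin n), ¬ Indep I →
      ∃ C, C ⊆ I ∧ ¬ Indep C ∧ ∀ C' ⊂ C, Indep C' := by
    intro I
    induction I using Finset.strongInduction with
    | _ I ih =>
      intro hI
      by_cases h : ∀ C' ⊂ I, Indep C'
      · exact ⟨I, Finset.Subset.refl I, hI, h⟩
      · push_neg at h
        obtain ⟨C', hC'sub, hC'dep⟩ := h
        obtain ⟨C, h1, h2, h3⟩ := ih C' hC'sub hC'dep
        exact ⟨C, h1.trans hC'sub.subset, h2, h3⟩
  -- every set of size < m is independent
  have hsmall : ∀ I : Finset (Fin n), I.card < m → Indep I := by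
    intro I hIcard
    by_contra hI
    obtain ⟨C, hCsub, hCdep, hCmin⟩ := hmin I hI
    have := hpaving C hCdep hCmin
    have hle : C.card ≤ I.card := Finset.card_le_card hCsub
    omega
  set P : Finset (Fin n) → Prop :=
    fun X => m ≤ X.card ∧ ∀ S ⊆ X, S.card = m → ¬ Indep S with hP
  set 𝒜 : Finset (Finset (Fin n)) :=
    Finset.univ.filter (fun X => P X ∧ ∀ Y, P Y → X ⊆ Y → X = Y) with h𝒜
  have hmemA : ∀ X, X ∈ 𝒜 ↔ P X ∧ ∀ Y, P Y → X ⊆ Y → X = Y := by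
    intro X
    simp [h𝒜, Finset.mem_filter]
  -- extension to a maximal P-set
  have hext : ∀ X, P X → ∃ Y, P Y ∧ (∀ Z, P Z → Y ⊆ Z → Y = Z) ∧ X ⊆ Y := by
    intro X hX
    obtain ⟨Y, hYmem, hYmax⟩ := Finset.exists_max_image
      (Finset.univ.filter (fun Y => P Y ∧ X ⊆ Y)) Finset.card
      ⟨X, Finset.mem_filter.mpr ⟨Finset.mem_univ _, hX, Finset.Subset.refl _⟩⟩
    rw [Finset.mem_filter] at hYmem
    refine ⟨Y, hYmem.2.1, ?_, hYmem.2.2⟩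
    intro Z hZ hYZ
    have hZmem : Z ∈ Finset.univ.filter (fun Y => P Y ∧ X ⊆ Y) := by
      rw [Finset.mem_filter]
      exact ⟨Finset.mem_univ _, hZ, hYmem.2.2.trans hYZ⟩
    exact Finset.eq_of_subset_of_card_le hYZ (hYmax Z hZmem)
  refine ⟨𝒜.card, fun i => (𝒜.equivFin.symm i).1, ?_, ?_⟩
  · intro I
    constructor
    · intro hI
      refine ⟨hrank_le I hI, fun i => ?_⟩
      set Ai := (𝒜.equivFin.symm i).1 with hAidef
      have hAi : P Ai ∧ ∀ Y, P Y → Ai ⊆ Y → Ai = Y :=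
        (hmemA Ai).mp (𝒜.equivFin.symm i).2
      have hcard : (I ∩ Ai).card < m := by
        by_contra h
        push_neg at h
        obtain ⟨S, hS, hScard⟩ := Finset.exists_subset_card_eq h
        exact hAi.1.2 S (hS.trans Finset.inter_subset_right) hScard
          (hdown I S (hS.trans Finset.inter_subset_left) hI)
      show ((I ∩ Ai).card : ℤ) ≤ (m : ℤ) - 1
      omega
    · rintro ⟨hIcard, hIint⟩
      by_contra hI
      obtain ⟨C, hCsub, hCdep, hCmin⟩ := hmin I hI
      have hC := hpaving C hCdep hCmin
      have hle : C.card ≤ I.card := Finset.card_le_card hCsub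
      have hCm : C.card = m := by omega
      have hCI : C = I := Finset.eq_of_subset_of_card_le hCsub (by omega)
      have hIm : I.card = m := by omega
      have hPI : P I := by
        refine ⟨by omega, fun S hS hScard => ?_⟩
        have : S = I := Finset.eq_of_subset_of_card_le hS (by omega)
        rw [this, ← hCI]
        exact hCdep
      obtain ⟨Y, hPY, hYmax, hIY⟩ := hext I hPI
      have hY𝒜 : Y ∈ 𝒜 := (hmemA Y).mpr ⟨hPY, hYmax⟩
      have key : ((I ∩ ((𝒜.equivFin.symm (𝒜.equivFin ⟨Y, hY𝒜⟩)).1 : Finset (Fin n))).card : ℤ) ≤ (m : ℤ) - 1 :=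
        hIint (𝒜.equivFin ⟨Y, hY𝒜⟩)
      rw [Equiv.symm_apply_apply] at key
      rw [show ((⟨Y, hY𝒜⟩ : {x // x ∈ 𝒜}) : Finset (Fin n)) = Y from rfl] at key
      rw [Finset.inter_eq_left.mpr hIY] at key
      omega
  · intro i j hij
    set A := (𝒜.equivFin.symm i).1 with hAdef
    set B := (𝒜.equivFin.symm j).1 with hBdef
    have hA : P A ∧ ∀ Y, P Y → A ⊆ Y → A = Y := (hmemA A).mp (𝒜.equivFin.symm i).2
    have hB : P B ∧ ∀ Y, P Y → B ⊆ Y → B = Y := (hmemA B).mp (𝒜.equivFin.symm j).2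
    have hAB : A ≠ B := by
      intro h
      exact hij (𝒜.equivFin.symm.injective (Subtype.ext h))
    by_contra hcard
    push_neg at hcard
    have hcard' : ((m : ℤ)) - 2 < ((A ∩ B).card : ℤ) := hcard
    have hDle : m - 1 ≤ (A ∩ B).card := by omega
    obtain ⟨D, hDsub, hDcard⟩ := Finset.exists_subset_card_eq hDle
    have hDindep : Indep D := by
      rcases Nat.eq_zero_or_pos m with hm | hm
      · have : D = ∅ := Finset.card_eq_zero.mp (by omega)
        rw [this]; exact hempty
      · exact hsmall D (by omega)
    have hAnotsub : ¬ A ⊆ B := fun h => hAB (hA.2 B hB.1 h)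
    obtain ⟨a, haA, haB⟩ := Finset.not_subset.mp hAnotsub
    have haD : a ∉ D := fun h => haB (Finset.inter_subset_right (hDsub h))
    have hPins : P (insert a B) := by
      refine ⟨le_trans hB.1.1 (Finset.card_le_card (Finset.subset_insert _ _)), ?_⟩
      intro S hS hScard hSindep
      by_cases haS : a ∈ S
      · have hm1 : 1 ≤ m := hScard ▸ Finset.card_pos.mpr ⟨a, haS⟩
        obtain ⟨x, hx, hxind⟩ := hexch S D hSindep hDindep (by omega)
        rw [Finset.mem_sdiff] at hx
        by_cases hxa : x = a
        · rw [hxa] at hxind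
          refine hA.1.2 (insert a D) ?_ ?_ hxind
          · exact Finset.insert_subset haA (hDsub.trans Finset.inter_subset_left)
          · rw [Finset.card_insert_of_notMem haD]; omega
        · have hxB : x ∈ B := by
            have := hS hx.1
            rw [Finset.mem_insert] at this
            tauto
          refine hB.1.2 (insert x D) ?_ ?_ hxind
          · exact Finset.insert_subset hxB (hDsub.trans Finset.inter_subset_right)
          · rw [Finset.card_insert_of_notMem hx.2]; omega
      · have hSB : S ⊆ B := fun y hy =>
          (Finset.mem_insert.mp (hS hy)).elim
            (fun h => absurd (h ▸ hy) haS) id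
        exact hB.1.2 S hSB hScard hSindep
    have hBeq := hB.2 (insert a B) hPins (Finset.subset_insert _ _)
    exact haB (hBeq ▸ Finset.mem_insert_self a B)
end

section
/- Let A₁,…,A_k ⊆ [n] each of size d satisfy |A(J∪{i})| ≥ (1−ε)·d·|J∪{i}| for all J ⊆ [k] with |J∪{i}| ≤ L, where ε = b/(4d). Let B ⊆ [k], i ∉ B, and define g_B(J) = (b−d)|J| + |A(J)| for J ⊆ B. Then for every nonempty J ⊆ B with |J| < τ (where τ ≤ L and 2τ−2 ≤ L), |A_i ∩ A(J)| ≤ g_B(J). Consequently A_i is independent in the matroid M_B defined by these constraints together with |I| ≤ d, so rank_{M_B}(A_i) = d. -/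
/-- The rank function of a matroid with independent sets `Indep`:
the maximum cardinality of an independent subset of `S`. -/
noncomputable def rankOf {n : ℕ} (Indep : Finset (Fin n) → Prop)
    (S : Finset (Fin n)) : ℕ :=
  sSup {m : ℕ | ∃ I : Finset (Fin n), I ⊆ S ∧ Indep I ∧ I.card = m}

theorem stmt_18 (n k d L τ : ℕ) (b ε : ℝ) (hb : 0 < b) (hd : 0 < d)
    (hτ : 0 < τ) (hτL : τ ≤ L) (hτL2 : 2 * τ - 2 ≤ L)
    (hε : ε = b / (4 * d))
    (A : Fin k → Finset (Fin n)) (hsize : ∀ j, (A j).card = d)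
    (hexp : ∀ (J : Finset (Fin k)) (i : Fin k), (insert i J).card ≤ L →
      (1 - ε) * d * (insert i J).card ≤ (((insert i J).biUnion A).card : ℝ))
    (B : Finset (Fin k)) (i : Fin k) (hi : i ∉ B)
    (g : Finset (Fin k) → ℝ)
    (hg : ∀ J : Finset (Fin k), g J = (b - d) * J.card + ((J.biUnion A).card : ℝ))
    (Indep : Finset (Fin n) → Prop)
    (hIndep : ∀ I : Finset (Fin n), Indep I ↔ I.card ≤ d ∧
      ∀ J ⊆ B, J.Nonempty → J.card < τ → ((I ∩ J.biUnion A).card : ℝ) ≤ g J) :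
    (∀ J ⊆ B, J.Nonempty → J.card < τ → ((A i ∩ J.biUnion A).card : ℝ) ≤ g J) ∧
    Indep (A i) ∧
    rankOf Indep (A i) = d := by
  have hdR : (0 : ℝ) < (d : ℝ) := by exact_mod_cast hd
  have hεd : ε * d = b / 4 := by rw [hε]; field_simp
  have key : ∀ J ⊆ B, J.Nonempty → J.card < τ →
      ((A i ∩ J.biUnion A).card : ℝ) ≤ g J := by
    intro J hJB hJne hJτ
    have hiJ : i ∉ J := fun h => hi (hJB h)
    have hcard : (insert i J).card = J.card + 1 := Finset.card_insert_of_notMem hiJ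
    have hL : (insert i J).card ≤ L := by rw [hcard]; omega
    have hexp' := hexp J i hL
    rw [Finset.biUnion_insert, hcard] at hexp'
    have hunion := Finset.card_inter_add_card_union (A i) (J.biUnion A)
    have hunionR : ((A i ∩ J.biUnion A).card : ℝ) + ((A i ∪ J.biUnion A).card : ℝ)
        = (d : ℝ) + ((J.biUnion A).card : ℝ) := by
      have := hsize i
      exact_mod_cast by rw [hunion, this]
    have hJ1 : (1 : ℝ) ≤ (J.card : ℝ) := by
      exact_mod_cast Nat.one_le_iff_ne_zero.mpr (Finset.card_ne_zero_of_mem hJne.choose_spec)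
    rw [hg]
    have hc : ((J.card + 1 : ℕ) : ℝ) = (J.card : ℝ) + 1 := by push_cast; ring
    rw [hc] at hexp'
    nlinarith [hexp', hunionR, hb, hdR, hJ1]
  have hInd : Indep (A i) := (hIndep _).mpr ⟨le_of_eq (hsize i), key⟩
  refine ⟨key, hInd, ?_⟩
  have hmem : d ∈ {m : ℕ | ∃ I : Finset (Fin n), I ⊆ A i ∧ Indep I ∧ I.card = m} :=
    ⟨A i, subset_rfl, hInd, hsize i⟩
  have hub : ∀ m ∈ {m : ℕ | ∃ I : Finset (Fin n), I ⊆ A i ∧ Indep I ∧ I.card = m}, m ≤ d := by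
    rintro m ⟨I, _, hI, rfl⟩
    exact ((hIndep I).mp hI).1
  exact le_antisymm (csSup_le ⟨d, hmem⟩ hub) (le_csSup ⟨d, hub⟩ hmem)
end
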